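/- Let G* be the infimum of J(w, b, d) over all tuples consisting of (w, b), d : I_u → {−1, 1}, a partition C of I_l into nonempty label-pure clusters, and a partition D of I_u into nonempty clusters on which d is constant, subject to: each cluster of C is contained in I⁺_{(w,b)} or in I⁻_{(w,b)}, and each cluster of D is contained in one of I⁺⁺_{(w,b,d)}, I⁺⁻_{(w,b,d)}, I⁻⁺_{(w,b,d)}, I⁻⁻_{(w,b,d)}. Let H* be the infimum, over the same constrained tuples (with d constant equal to d_k on each D_k), of the weighted aggregated objective (1/2)‖w‖² + M_l * Σ_k |C_k| * max(0, 1 − ŷ_k * (⟪w, x̄_{C_k}⟫ + b)) + M_u * Σ_k |D_k| * max(0, 1 − d_k * (⟪w, x̄_{D_k}⟫ + b)), where ŷ_k is the common label on C_k and x̄_T = (Σ_{i∈T} x i)/|T|. Then G* = H*. -/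

import Mathlib

open Finset
open scoped RealInnerProductSpace

noncomputable section

/-- The cluster of index `k` within the index set `S`. -/
def clusterIn {n K : ℕ} (S : Finset (Fin n)) (c : Fin n → Fin K) (k : Fin K) :
    Finset (Fin n) :=
  S.filter fun i => c i = k

/-- Centroid of a finite set of data points. -/
def centroidOf {n m : ℕ} (x : Fin n → EuclideanSpace ℝ (Fin m))
    (S : Finset (Fin n)) : EuclideanSpace ℝ (Fin m) :=
  (S.card : ℝ)⁻¹ • ∑ i ∈ S, x i

/-- The semi-supervised SVM (S³VM) objective. -/
def s3J {n m : ℕ} (x : Fin n → EuclideanSpace ℝ (Fin m)) (y : Fin n → ℝ)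
    (Il : Finset (Fin n)) (Ml Mu : ℝ)
    (w : EuclideanSpace ℝ (Fin m)) (b : ℝ) (d : Fin n → ℝ) : ℝ :=
  (1 / 2) * ‖w‖ ^ 2
    + Ml * ∑ i ∈ Il, max 0 (1 - y i * (⟪w, x i⟫ + b))
    + Mu * ∑ i ∈ Ilᶜ, max 0 (1 - d i * (⟪w, x i⟫ + b))

/-- The weighted aggregated S³VM objective. -/
def s3H {n m Kl Ku : ℕ} (x : Fin n → EuclideanSpace ℝ (Fin m))
    (Il : Finset (Fin n)) (Ml Mu : ℝ)
    (cl : Fin n → Fin Kl) (yhat : Fin Kl → ℝ) (cu : Fin n → Fin Ku)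
    (w : EuclideanSpace ℝ (Fin m)) (b : ℝ) (d : Fin Ku → ℝ) : ℝ :=
  (1 / 2) * ‖w‖ ^ 2
    + Ml * ∑ k, ((clusterIn Il cl k).card : ℝ) *
        max 0 (1 - yhat k * (⟪w, centroidOf x (clusterIn Il cl k)⟫ + b))
    + Mu * ∑ k, ((clusterIn Ilᶜ cu k).card : ℝ) *
        max 0 (1 - d k * (⟪w, centroidOf x (clusterIn Ilᶜ cu k)⟫ + b))

/-- The side constraints on a tuple `(w, b, d, cl, yhat, cu, du)`: the clusters
of labeled entries are nonempty and label-pure with common labels `yhat`, each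
contained in `I⁺` or `I⁻`; the clusters of unlabeled entries are nonempty with
constant decision labels `du`, each contained in one of `I⁺⁺`, `I⁺⁻`, `I⁻⁺`,
`I⁻⁻`. -/
def s3Constraint {n m Kl Ku : ℕ} (x : Fin n → EuclideanSpace ℝ (Fin m))
    (y : Fin n → ℝ) (Il : Finset (Fin n))
    (w : EuclideanSpace ℝ (Fin m)) (b : ℝ) (d : Fin n → ℝ)
    (cl : Fin n → Fin Kl) (yhat : Fin Kl → ℝ)
    (cu : Fin n → Fin Ku) (du : Fin Ku → ℝ) : Prop :=
  (∀ i ∈ Ilᶜ, d i = 1 ∨ d i = -1) ∧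
  (∀ k, (clusterIn Il cl k).Nonempty) ∧
  (∀ i ∈ Il, yhat (cl i) = y i) ∧
  (∀ k, (clusterIn Ilᶜ cu k).Nonempty) ∧
  (∀ i ∈ Ilᶜ, du (cu i) = d i) ∧
  (∀ k,
    (∀ i ∈ clusterIn Il cl k, 0 < 1 - y i * (⟪w, x i⟫ + b)) ∨
    (∀ i ∈ clusterIn Il cl k, 1 - y i * (⟪w, x i⟫ + b) ≤ 0)) ∧
  (∀ k,
    (∀ i ∈ clusterIn Ilᶜ cu k,
        0 < 1 - d i * (⟪w, x i⟫ + b) ∧ 0 < ⟪w, x i⟫ + b) ∨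
    (∀ i ∈ clusterIn Ilᶜ cu k,
        0 < 1 - d i * (⟪w, x i⟫ + b) ∧ ⟪w, x i⟫ + b ≤ 0) ∨
    (∀ i ∈ clusterIn Ilᶜ cu k,
        1 - d i * (⟪w, x i⟫ + b) ≤ 0 ∧ 0 < ⟪w, x i⟫ + b) ∨
    (∀ i ∈ clusterIn Ilᶜ cu k,
        1 - d i * (⟪w, x i⟫ + b) ≤ 0 ∧ ⟪w, x i⟫ + b ≤ 0))

/-! On every admissible tuple the two objectives coincide, so the infima are taken over the same
set of values. Within a cluster the label is constant and the hinge arguments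
`1 - y i * (⟪w, x i⟫ + b)` all have the same sign, so the sum of their positive parts is the
positive part of their sum; that sum is affine in `⟪w, x i⟫`, hence equals `|T|` times the
hinge term at the centroid. -/

theorem Finset.sum_max_zero_of_forall_nonneg_or_forall_nonpos {ι α : Type*}
    [AddCommMonoid α] [LinearOrder α] [IsOrderedAddMonoid α] {s : Finset ι} {f : ι → α}
    (h : (∀ i ∈ s, 0 ≤ f i) ∨ (∀ i ∈ s, f i ≤ 0)) :
    ∑ i ∈ s, max 0 (f i) = max 0 (∑ i ∈ s, f i) := by
  rcases h with h | h
  · rw [max_eq_right (sum_nonneg h)]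
    exact sum_congr rfl fun i hi => max_eq_right (h i hi)
  · rw [max_eq_left (sum_nonpos h)]
    exact sum_eq_zero fun i hi => max_eq_left (h i hi)

theorem card_mul_inner_centroidOf {n m : ℕ} (x : Fin n → EuclideanSpace ℝ (Fin m))
    {T : Finset (Fin n)} (hT : T.Nonempty) (w : EuclideanSpace ℝ (Fin m)) :
    (T.card : ℝ) * ⟪w, centroidOf x T⟫ = ∑ i ∈ T, ⟪w, x i⟫ := by
  have hcard : (T.card : ℝ) ≠ 0 := by exact_mod_cast hT.card_pos.ne'
  rw [centroidOf, inner_smul_right, inner_sum, mul_inv_cancel_left₀ hcard]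

theorem sum_hinge_eq_card_mul_hinge_centroidOf {n m : ℕ}
    (x : Fin n → EuclideanSpace ℝ (Fin m)) (w : EuclideanSpace ℝ (Fin m)) (b : ℝ)
    {T : Finset (Fin n)} (hT : T.Nonempty) {y : Fin n → ℝ} {c : ℝ}
    (hy : ∀ i ∈ T, y i = c)
    (hsign : (∀ i ∈ T, 0 < 1 - y i * (⟪w, x i⟫ + b)) ∨
      (∀ i ∈ T, 1 - y i * (⟪w, x i⟫ + b) ≤ 0)) :
    ∑ i ∈ T, max 0 (1 - y i * (⟪w, x i⟫ + b)) =
      T.card * max 0 (1 - c * (⟪w, centroidOf x T⟫ + b)) := by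
  have hsum : ∑ i ∈ T, (1 - y i * (⟪w, x i⟫ + b)) =
      T.card * (1 - c * (⟪w, centroidOf x T⟫ + b)) := by
    rw [sum_congr rfl fun i hi => by rw [hy i hi], sum_sub_distrib, ← mul_sum,
      sum_add_distrib, ← card_mul_inner_centroidOf x hT w]
    simp only [sum_const, nsmul_eq_mul, mul_one]
    ring
  rw [sum_max_zero_of_forall_nonneg_or_forall_nonpos
      (hsign.imp (fun h i hi => (h i hi).le) id), hsum,
    mul_max_of_nonneg _ _ (Nat.cast_nonneg _), mul_zero]

theorem sum_hinge_eq_sum_clusterIn {n m K : ℕ}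
    (x : Fin n → EuclideanSpace ℝ (Fin m)) (w : EuclideanSpace ℝ (Fin m)) (b : ℝ)
    (S : Finset (Fin n)) (c : Fin n → Fin K) (y : Fin n → ℝ) (yhat : Fin K → ℝ)
    (hne : ∀ k, (clusterIn S c k).Nonempty) (hy : ∀ i ∈ S, yhat (c i) = y i)
    (hsign : ∀ k, (∀ i ∈ clusterIn S c k, 0 < 1 - y i * (⟪w, x i⟫ + b)) ∨
      (∀ i ∈ clusterIn S c k, 1 - y i * (⟪w, x i⟫ + b) ≤ 0)) :
    ∑ i ∈ S, max 0 (1 - y i * (⟪w, x i⟫ + b)) =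
      ∑ k, ((clusterIn S c k).card : ℝ) *
        max 0 (1 - yhat k * (⟪w, centroidOf x (clusterIn S c k)⟫ + b)) := by
  rw [← sum_fiberwise S c]
  refine sum_congr rfl fun k _ => sum_hinge_eq_card_mul_hinge_centroidOf x w b (hne k)
    (fun i hi => ?_) (hsign k)
  obtain ⟨hiS, rfl⟩ := mem_filter.mp hi
  exact (hy i hiS).symm

theorem s3J_eq_s3H_of_s3Constraint {n m Kl Ku : ℕ} {x : Fin n → EuclideanSpace ℝ (Fin m)}
    {y : Fin n → ℝ} {Il : Finset (Fin n)} (Ml Mu : ℝ) {w : EuclideanSpace ℝ (Fin m)} {b : ℝ}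
    {d : Fin n → ℝ} {cl : Fin n → Fin Kl} {yhat : Fin Kl → ℝ} {cu : Fin n → Fin Ku}
    {du : Fin Ku → ℝ} (hc : s3Constraint x y Il w b d cl yhat cu du) :
    s3J x y Il Ml Mu w b d = s3H x Il Ml Mu cl yhat cu w b du := by
  obtain ⟨-, hlne, hyhat, hune, hdu, hlsign, husign⟩ := hc
  have husign' : ∀ k, (∀ i ∈ clusterIn Ilᶜ cu k, 0 < 1 - d i * (⟪w, x i⟫ + b)) ∨
      (∀ i ∈ clusterIn Ilᶜ cu k, 1 - d i * (⟪w, x i⟫ + b) ≤ 0) := fun k => by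
    rcases husign k with h | h | h | h
    · exact Or.inl fun i hi => (h i hi).1
    · exact Or.inl fun i hi => (h i hi).1
    · exact Or.inr fun i hi => (h i hi).1
    · exact Or.inr fun i hi => (h i hi).1
  rw [s3J, s3H, sum_hinge_eq_sum_clusterIn x w b Il cl y yhat hlne hyhat hlsign,
    sum_hinge_eq_sum_clusterIn x w b Ilᶜ cu d du hune hdu husign']

theorem s3vm_Gstar_eq_Hstar_general (n m : ℕ)
    (x : Fin n → EuclideanSpace ℝ (Fin m)) (y : Fin n → ℝ)
    (Il : Finset (Fin n)) (Ml Mu : ℝ) :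
    sInf {r : ℝ | ∃ (w : EuclideanSpace ℝ (Fin m)) (b : ℝ) (d : Fin n → ℝ)
        (Kl : ℕ) (cl : Fin n → Fin Kl) (yhat : Fin Kl → ℝ)
        (Ku : ℕ) (cu : Fin n → Fin Ku) (du : Fin Ku → ℝ),
        s3Constraint x y Il w b d cl yhat cu du ∧
        r = s3J x y Il Ml Mu w b d} =
    sInf {r : ℝ | ∃ (w : EuclideanSpace ℝ (Fin m)) (b : ℝ) (d : Fin n → ℝ)
        (Kl : ℕ) (cl : Fin n → Fin Kl) (yhat : Fin Kl → ℝ)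
        (Ku : ℕ) (cu : Fin n → Fin Ku) (du : Fin Ku → ℝ),
        s3Constraint x y Il w b d cl yhat cu du ∧
        r = s3H x Il Ml Mu cl yhat cu w b du} := by
  congr 1
  ext r
  constructor <;> rintro ⟨w, b, d, Kl, cl, yhat, Ku, cu, du, hc, rfl⟩
  · exact ⟨w, b, d, Kl, cl, yhat, Ku, cu, du, hc, s3J_eq_s3H_of_s3Constraint Ml Mu hc⟩
  · exact ⟨w, b, d, Kl, cl, yhat, Ku, cu, du, hc, (s3J_eq_s3H_of_s3Constraint Ml Mu hc).symm⟩

/-- Over the constrained tuples, the optimal value `G*` of the original S³VM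
objective equals the optimal value `H*` of the weighted aggregated
objective. -/
theorem s3vm_Gstar_eq_Hstar (n m : ℕ)
    (x : Fin n → EuclideanSpace ℝ (Fin m)) (y : Fin n → ℝ)
    (Il : Finset (Fin n)) (hy : ∀ i ∈ Il, y i = 1 ∨ y i = -1)
    (Ml Mu : ℝ) (hMl : 0 < Ml) (hMu : 0 < Mu) :
    sInf {r : ℝ | ∃ (w : EuclideanSpace ℝ (Fin m)) (b : ℝ) (d : Fin n → ℝ)
        (Kl : ℕ) (cl : Fin n → Fin Kl) (yhat : Fin Kl → ℝ)
        (Ku : ℕ) (cu : Fin n → Fin Ku) (du : Fin Ku → ℝ),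
        s3Constraint x y Il w b d cl yhat cu du ∧
        r = s3J x y Il Ml Mu w b d} =
    sInf {r : ℝ | ∃ (w : EuclideanSpace ℝ (Fin m)) (b : ℝ) (d : Fin n → ℝ)
        (Kl : ℕ) (cl : Fin n → Fin Kl) (yhat : Fin Kl → ℝ)
        (Ku : ℕ) (cu : Fin n → Fin Ku) (du : Fin Ku → ℝ),
        s3Constraint x y Il w b d cl yhat cu du ∧
        r = s3H x Il Ml Mu cl yhat cu w b du} :=
  s3vm_Gstar_eq_Hstar_general n m x y Il Ml Mu

end
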